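/- Under the equal power allocation $p_{c,k} = P_{\max}/K$ and effective gains $g_k = P_{\max}\rho_k^2 M_t M_r N^2/K^3 > 0$, the achievable rate $R(N) = \sum_{k=1}^K \log_2(1 + g_k)$ satisfies $R(N) - (\log_2 \prod_{k=1}^K (P_{\max}\rho_k^2 M_t M_r) + K\log_2(N^2/K^3)) \to 0$ as $N \to \infty$; in particular $R(N) = \Theta(\log N)$ with $\lim_{N\to\infty} R(N)/\log_2 N = 2K$. -/

import Mathlib

/-!
Each gain `g_k(N) = c_k N² / K³` tends to infinity, and `log₂ (1 + g) - log₂ g → 0` as `g → ∞`,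
so `R(N)` agrees with `∑ₖ log₂ g_k(N) = log₂ ∏ₖ c_k + K log₂ (N² / K³)` up to `o(1)`.
The latter is `2K log₂ N` plus a constant, which gives the ratio limit.
-/

open Finset Filter Topology Real

theorem tendsto_div_of_tendsto_sub_mul {α : Type*} {l : Filter α} {f g : α → ℝ} {a L : ℝ}
    (hg : Tendsto g l atTop) (h : Tendsto (fun x => f x - a * g x) l (𝓝 L)) :
    Tendsto (fun x => f x / g x) l (𝓝 a) := by
  have hquot : Tendsto (fun x => (f x - a * g x) / g x + a) l (𝓝 (0 + a)) :=
    (h.div_atTop hg).add_const a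
  rw [zero_add] at hquot
  refine hquot.congr' ?_
  filter_upwards [hg.eventually_ne_atTop 0] with x hx
  field_simp
  ring

theorem Real.tendsto_logb_one_add_mul_sub_logb {b c : ℝ} (hc : 0 < c) :
    Tendsto (fun x => logb b (1 + c * x) - (logb b c + logb b x)) atTop (𝓝 0) := by
  refine ((tendsto_logb_comp_add_sub_logb (b := b) 1).comp
    (tendsto_id.const_mul_atTop hc)).congr' ?_
  filter_upwards [eventually_gt_atTop 0] with x hx
  simp only [Function.comp_apply, id_eq, add_comm _ (1 : ℝ),
    logb_mul hc.ne' hx.ne']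

/-- Large-`N` scaling law of the rate: `R(N)` equals
`log₂ ∏ₖ (P ρₖ² M_t M_r) + K log₂(N²/K³)` up to a vanishing term, and
`R(N)/log₂ N → 2K`. -/
theorem rate_scaling_law (K : ℕ) (hK : 0 < K)
    (Mt Mr : ℕ) (hMt : 1 ≤ Mt) (hMr : 1 ≤ Mr)
    (Pmax : ℝ) (hP : 0 < Pmax)
    (ρsq : Fin K → ℝ) (hρ : ∀ k, 0 < ρsq k) :
    let R : ℝ → ℝ := fun N =>
      ∑ k, Real.logb 2 (1 + Pmax * ρsq k * Mt * Mr * N ^ 2 / K ^ 3)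
    Tendsto (fun N : ℝ => R N -
        (Real.logb 2 (∏ k, Pmax * ρsq k * Mt * Mr)
          + K * Real.logb 2 (N ^ 2 / K ^ 3))) atTop (nhds 0) ∧
    Tendsto (fun N : ℝ => R N / Real.logb 2 N) atTop (nhds (2 * K)) := by
  intro R
  have hc (k : Fin K) : 0 < Pmax * ρsq k * Mt * Mr := by
    have := hρ k
    have : (0 : ℝ) < Mt := by exact_mod_cast hMt
    have : (0 : ℝ) < Mr := by exact_mod_cast hMr
    positivity
  have hx : Tendsto (fun N : ℝ => N ^ 2 / K ^ 3) atTop atTop :=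
    (tendsto_pow_atTop two_ne_zero).atTop_div_const (by positivity)
  have hdiff : Tendsto (fun N : ℝ => R N -
      (logb 2 (∏ k, Pmax * ρsq k * Mt * Mr) + K * logb 2 (N ^ 2 / K ^ 3))) atTop (𝓝 0) := by
    have hterms := tendsto_finsetSum univ fun k _ =>
      (tendsto_logb_one_add_mul_sub_logb (b := 2) (hc k)).comp hx
    simp only [sum_const_zero, Function.comp_def, sum_sub_distrib, sum_add_distrib, sum_const,
      card_univ, Fintype.card_fin, nsmul_eq_mul] at hterms
    simpa only [R, mul_div_assoc, logb_prod _ _ fun k _ => (hc k).ne'] using hterms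
  set C := logb 2 (∏ k, Pmax * ρsq k * Mt * Mr)
  have hlin : Tendsto (fun N => R N - 2 * K * logb 2 N) atTop (𝓝 (C - K * logb 2 (K ^ 3))) := by
    refine (zero_add (C - K * logb 2 (K ^ 3)) ▸ hdiff.add_const _).congr' ?_
    filter_upwards [eventually_gt_atTop 0] with N hN
    rw [logb_div (by positivity) (by positivity), logb_pow]
    push_cast
    ring
  exact ⟨hdiff, tendsto_div_of_tendsto_sub_mul (tendsto_logb_atTop one_lt_two) hlin⟩
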